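/- Let S₁, S₂, …, Sₙ be queryless schedules such that each Sᵢ and the concatenation S₁.S₂.⋯.Sₙ are all consistent. Then: N^min_I(S₁⋯Sₙ) = ⋃_{i=1}^{n} (N^min_I(Sᵢ) ∩ ⋂_{k<i} N^max_I(Sₖ)); N^max_I(S₁⋯Sₙ) = ⋂_{i=1}^{n} (N^max_I(Sᵢ) ∪ ⋃_{k<i} N^min_I(Sₖ)); E^min_I(S₁⋯Sₙ) = ⋃_{i=1}^{n} (E^min_I(Sᵢ) ∩ ⋂_{k<i} E^max_I(Sₖ)); E^max_I(S₁⋯Sₙ) = ⋂_{i=1}^{n} (E^max_I(Sᵢ) ∪ ⋃_{k<i} E^min_I(Sₖ)). -/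

import Mathlib

attribute [local instance] Classical.propDecidable

/-! ## Data model: nodes, labels, edges, document trees -/

abbrev Node := ℕ
abbrev Label := ℕ
abbrev Edge := Node × Label × Node

/-- A candidate document tree: a finite node set, a finite edge set, a root. -/
structure Tree3 where
  N : Finset Node
  E : Finset Edge
  root : Node

/-- The edge-step relation of a set of labelled edges. -/
def estep (E : Set Edge) (a b : Node) : Prop := ∃ l : Label, (a, l, b) ∈ E

/-- `T` is a document tree: the root is a node, edges connect nodes, every node has at
most one incoming edge, the root has none, and every node is reachable from the root
(edges are directed from parent to child). -/
def IsDT (T : Tree3) : Prop :=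
  T.root ∈ T.N ∧
  (∀ e ∈ T.E, e.1 ∈ T.N ∧ e.2.2 ∈ T.N) ∧
  (∀ e ∈ T.E, ∀ e' ∈ T.E, e.2.2 = e'.2.2 → e = e') ∧
  (∀ e ∈ T.E, e.2.2 ≠ T.root) ∧
  (∀ n ∈ T.N, Relation.ReflTransGen (estep (↑T.E)) T.root n)

/-! ## Update operations and queryless schedules -/

inductive Op where
  | add : Node → Label → Node → Op
  | del : Node → Label → Node → Op
deriving DecidableEq

/-- Apply an update operation to a tree; `none` when the operation is undefined. -/
noncomputable def applyOp (o : Op) (T : Tree3) : Option Tree3 :=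
  match o with
  | Op.add m l n =>
      let T' : Tree3 := ⟨insert n T.N, insert (m, l, n) T.E, T.root⟩
      if (m, l, n) ∈ T.E ∨ ¬ IsDT T' then none else some T'
  | Op.del m l n =>
      let T' : Tree3 := ⟨T.N.erase n, T.E.erase (m, l, n), T.root⟩
      if (m, l, n) ∉ T.E ∨ ¬ IsDT T' then none else some T'

/-- An action is an operation tagged with a transaction identifier. -/
abbrev QLAction := Op × ℕ

/-- A queryless (QL) schedule is a finite sequence of actions. -/
abbrev QLSchedule := List QLAction

/-- Apply a QL schedule to a tree, operation by operation. -/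
noncomputable def applyQL : QLSchedule → Tree3 → Option Tree3
  | [], T => some T
  | a :: rest, T => (applyOp a.1 T).bind (applyQL rest)

/-- `S[T]` is defined (and `T` is a document tree). -/
def DefinedOn (S : QLSchedule) (T : Tree3) : Prop := IsDT T ∧ (applyQL S T).isSome

/-- A QL schedule is consistent iff it is defined on at least one document tree. -/
def ConsistentQL (S : QLSchedule) : Prop := ∃ T, DefinedOn S T

def Op.src : Op → Node
  | Op.add m _ _ => m
  | Op.del m _ _ => m

def Op.tgt : Op → Node
  | Op.add _ _ n => n
  | Op.del _ _ n => n

def Op.edge : Op → Edge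
  | Op.add m l n => (m, l, n)
  | Op.del m l n => (m, l, n)

/-- The list of operations of a QL schedule. -/
def ops (S : QLSchedule) : List Op := S.map Prod.fst

/-- The operation containing the first occurrence of the node `x` in `S`, if any. -/
def firstNodeOp (S : QLSchedule) (x : Node) : Option Op :=
  (ops S).find? (fun o => (o.src == x) || (o.tgt == x))

/-- The operation containing the last occurrence of the node `x` in `S`, if any. -/
def lastNodeOp (S : QLSchedule) (x : Node) : Option Op :=
  (ops S).reverse.find? (fun o => (o.src == x) || (o.tgt == x))

/-- The operation containing the first occurrence of the edge `e` in `S`, if any. -/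
def firstEdgeOp (S : QLSchedule) (e : Edge) : Option Op :=
  (ops S).find? (fun o => o.edge == e)

/-- The operation containing the last occurrence of the edge `e` in `S`, if any. -/
def lastEdgeOp (S : QLSchedule) (e : Edge) : Option Op :=
  (ops S).reverse.find? (fun o => o.edge == e)

/-- Some edge with target `x` occurs in `S`. -/
def occursTgt (S : QLSchedule) (x : Node) : Prop := ∃ o ∈ ops S, o.tgt = x

/-- `N^min_I(S)`. -/
def NminI (S : QLSchedule) : Set Node :=
  {x | ∃ l n, firstNodeOp S x = some (Op.add x l n)} ∪
  {x | ∃ l n, firstNodeOp S x = some (Op.del x l n)} ∪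
  {x | ∃ m l, firstNodeOp S x = some (Op.del m l x)}

/-- `N^max_I(S)`. -/
def NmaxI (S : QLSchedule) : Set Node :=
  {x | ¬ ∃ m l, firstNodeOp S x = some (Op.add m l x)}

/-- `E^min_I(S)`. -/
def EminI (S : QLSchedule) : Set Edge :=
  {e | firstEdgeOp S e = some (Op.del e.1 e.2.1 e.2.2)}

/-- `E^max_I(S)`. -/
def EmaxI (S : QLSchedule) : Set Edge :=
  EminI S ∪ {e | ¬ occursTgt S e.1 ∧ ¬ occursTgt S e.2.2}

/-- `N^min_O(S)`. -/
def NminO (S : QLSchedule) : Set Node :=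
  {x | ∃ l n, lastNodeOp S x = some (Op.del x l n)} ∪
  {x | ∃ l n, lastNodeOp S x = some (Op.add x l n)} ∪
  {x | ∃ m l, lastNodeOp S x = some (Op.add m l x)}

/-- `N^max_O(S)`. -/
def NmaxO (S : QLSchedule) : Set Node :=
  {x | ¬ ∃ m l, lastNodeOp S x = some (Op.del m l x)}

/-- `E^min_O(S)`. -/
def EminO (S : QLSchedule) : Set Edge :=
  {e | lastEdgeOp S e = some (Op.add e.1 e.2.1 e.2.2)}

/-- `E^max_O(S)`. -/
def EmaxO (S : QLSchedule) : Set Edge :=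
  EminO S ∪ {e | ¬ occursTgt S e.1 ∧ ¬ occursTgt S e.2.2}

/-- `ADD(S)`: edges whose last occurrence in `S` is an addition. -/
def ADDs (S : QLSchedule) : Set Edge :=
  {e | lastEdgeOp S e = some (Op.add e.1 e.2.1 e.2.2)}

/-- `DEL(S)`: edges whose last occurrence in `S` is a deletion. -/
def DELs (S : QLSchedule) : Set Edge :=
  {e | lastEdgeOp S e = some (Op.del e.1 e.2.1 e.2.2)}

/-- `T` is a basic input tree of `S`. -/
def BasicInput (S : QLSchedule) (T : Tree3) : Prop :=
  IsDT T ∧ NminI S ⊆ ↑T.N ∧ ↑T.N ⊆ NmaxI S ∧ EminI S ⊆ ↑T.E ∧ ↑T.E ⊆ EmaxI S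

/-- `T` is a basic output tree of `S`. -/
def BasicOutput (S : QLSchedule) (T : Tree3) : Prop :=
  IsDT T ∧ NminO S ⊆ ↑T.N ∧ ↑T.N ⊆ NmaxO S ∧ EminO S ⊆ ↑T.E ∧ ↑T.E ⊆ EmaxO S

/-- The C-condition (nine clauses). -/
def CCond (S : QLSchedule) : Prop :=
  (∀ i j (n l₁ n₁ n₂ l₂ : ℕ), i < j →
      (ops S)[i]? = some (Op.add n l₁ n₁) → (ops S)[j]? = some (Op.add n₂ l₂ n) →
      ∃ k : ℕ, i < k ∧ k < j ∧ (ops S)[k]? = some (Op.del n l₁ n₁)) ∧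
  (∀ i j (n₁ l₁ n n₂ l₂ : ℕ), i < j →
      (ops S)[i]? = some (Op.add n₁ l₁ n) → (ops S)[j]? = some (Op.add n₂ l₂ n) →
      ∃ k : ℕ, i < k ∧ k < j ∧ (ops S)[k]? = some (Op.del n₁ l₁ n)) ∧
  (∀ i j (n l₁ n₁ n₂ l₂ : ℕ), i < j →
      (ops S)[i]? = some (Op.add n l₁ n₁) → (ops S)[j]? = some (Op.del n₂ l₂ n) →
      ∃ k : ℕ, i < k ∧ k < j ∧ (ops S)[k]? = some (Op.del n l₁ n₁)) ∧
  (∀ i j (n₁ l₁ n l₂ n₂ : ℕ), i < j →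
      (ops S)[i]? = some (Op.add n₁ l₁ n) → (ops S)[j]? = some (Op.del n l₂ n₂) →
      ∃ k : ℕ, i < k ∧ k < j ∧ (ops S)[k]? = some (Op.add n l₂ n₂)) ∧
  (∀ i j (n₁ l₁ n n₂ l₂ : ℕ), i < j → (n₁, l₁) ≠ (n₂, l₂) →
      (ops S)[i]? = some (Op.add n₁ l₁ n) → (ops S)[j]? = some (Op.del n₂ l₂ n) →
      ∃ k : ℕ, i < k ∧ k < j ∧ (ops S)[k]? = some (Op.del n₁ l₁ n)) ∧
  (∀ i j (n l₁ n₁ n₂ l₂ : ℕ), i < j →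
      (ops S)[i]? = some (Op.del n l₁ n₁) → (ops S)[j]? = some (Op.add n₂ l₂ n) →
      ∃ k : ℕ, ∃ n₃ l₃ : ℕ, i < k ∧ k < j ∧ (ops S)[k]? = some (Op.del n₃ l₃ n)) ∧
  (∀ i j (n₁ l₁ n l₂ n₂ : ℕ), i < j →
      (ops S)[i]? = some (Op.del n₁ l₁ n) → (ops S)[j]? = some (Op.add n l₂ n₂) →
      ∃ k : ℕ, ∃ n₃ l₃ : ℕ, i < k ∧ k < j ∧ (ops S)[k]? = some (Op.add n₃ l₃ n)) ∧
  (∀ i j (n₁ l₁ n l₂ n₂ : ℕ), i < j →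
      (ops S)[i]? = some (Op.del n₁ l₁ n) → (ops S)[j]? = some (Op.del n l₂ n₂) →
      ∃ k : ℕ, ∃ n₃ l₃ : ℕ, i < k ∧ k < j ∧ (ops S)[k]? = some (Op.add n₃ l₃ n)) ∧
  (∀ i j (n₁ l₁ n n₂ l₂ : ℕ), i < j →
      (ops S)[i]? = some (Op.del n₁ l₁ n) → (ops S)[j]? = some (Op.del n₂ l₂ n) →
      ∃ k : ℕ, i < k ∧ k < j ∧ (ops S)[k]? = some (Op.add n₂ l₂ n))

/-! ## Transactions, equivalence and serializability of QL schedules -/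

/-- Two QL schedules are interleavings of the same set of transactions: for every
transaction identifier, the subsequences of actions with that identifier coincide. -/
def SameTrans (S S' : QLSchedule) : Prop :=
  ∀ t : ℕ, S.filter (fun a => a.2 == t) = S'.filter (fun a => a.2 == t)

/-- A schedule is serial iff the actions of each transaction occur consecutively. -/
def Serial (S : QLSchedule) : Prop :=
  ∀ i j k : ℕ, i ≤ j → j ≤ k →
    ∀ a b c : QLAction, S[i]? = some a → S[j]? = some b → S[k]? = some c →
      a.2 = c.2 → b.2 = a.2

/-- Two QL schedules are equivalent: they are defined on the same non-empty set of
document trees and produce the same output tree on each of them. -/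
def EquivQL (S S' : QLSchedule) : Prop :=
  (∃ T, DefinedOn S T) ∧ ∀ T, IsDT T → applyQL S T = applyQL S' T

/-- A QL schedule is serializable iff it is equivalent to a serial schedule over the
same set of transactions. -/
def SerializableQL (S : QLSchedule) : Prop :=
  ∃ S', Serial S' ∧ SameTrans S S' ∧ EquivQL S S'

/-! ## Paths and forests -/

/-- `SPath G m lp n`: there is a directed path from `m` to `n` in the edge set `G`
whose label path is `lp`. -/
inductive SPath (G : Set Edge) : Node → List Label → Node → Prop where
  | nil (n : Node) : SPath G n [] n
  | cons {m n n' : Node} {l : Label} {lp : List Label} :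
      (m, l, n) ∈ G → SPath G n lp n' → SPath G m (l :: lp) n'

/-- A set of edges is a forest: no two distinct edges share a target, and
there is no (non-trivial) directed cycle. -/
def IsForest (G : Set Edge) : Prop :=
  (∀ e ∈ G, ∀ e' ∈ G, e.2.2 = e'.2.2 → e = e') ∧
  ¬ ∃ (n : Node) (lp : List Label), lp ≠ [] ∧ SPath G n lp n

/-! ## Path expressions -/

inductive Step where
  | star : Step
  | lab : Label → Step
deriving DecidableEq

/-- Path expressions: `ε`, `pe/f` and `pe//f` (a single step `f` is `ε/f`). -/
inductive PathExpr where
  | eps : PathExpr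
  | child : PathExpr → Step → PathExpr
  | desc : PathExpr → Step → PathExpr
deriving DecidableEq

def Step.mtch : Step → Label → Prop
  | Step.star, _ => True
  | Step.lab l, l' => l = l'

def Step.mtchB : Step → Label → Bool
  | Step.star, _ => true
  | Step.lab l, l' => l == l'

/-- The set `L(pe)` of label paths represented by a path expression
(a label path is a list of labels). -/
def PathExpr.lang : PathExpr → Set (List Label)
  | PathExpr.eps => {[]}
  | PathExpr.child pe f => {w | ∃ u l, u ∈ pe.lang ∧ f.mtch l ∧ w = u ++ [l]}
  | PathExpr.desc pe f => {w | ∃ u v l, u ∈ pe.lang ∧ f.mtch l ∧ w = u ++ v ++ [l]}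

/-- `SOP` on a *reversed* label path. -/
def SOPr : PathExpr → List Label → Set PathExpr
  | pe, [] => {pe}
  | PathExpr.eps, _ :: _ => ∅
  | PathExpr.child pe f, l :: lp => if f.mtchB l then SOPr pe lp else ∅
  | PathExpr.desc pe f, l :: lp =>
      if f.mtchB l then SOPr pe lp ∪ SOPr (PathExpr.desc pe Step.star) lp else ∅
termination_by pe lp => lp.length

/-- `SOP(pe)_lp`: the set of non-empty `lp`-prefixes of `pe`. -/
def SOP (pe : PathExpr) (lp : List Label) : Set PathExpr := SOPr pe lp.reverse

/-- `L(SOP(pe)_lp)`. -/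
def LSOP (pe : PathExpr) (lp : List Label) : Set (List Label) :=
  ⋃ pe' ∈ SOP pe lp, pe'.lang

/-- `pe/lp`: append a label path to a path expression with `/` separators. -/
def PathExpr.appendLP : PathExpr → List Label → PathExpr
  | pe, [] => pe
  | pe, l :: lp => PathExpr.appendLP (PathExpr.child pe (Step.lab l)) lp

/-- The prefixes of a path expression (including `ε`). -/
def PathExpr.prefixes : PathExpr → Set PathExpr
  | PathExpr.eps => {PathExpr.eps}
  | PathExpr.child pe f => insert (PathExpr.child pe f) pe.prefixes
  | PathExpr.desc pe f => insert (PathExpr.desc pe f) pe.prefixes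

/-! ## Schedules with queries -/

inductive GOp where
  | query : Node → PathExpr → GOp
  | add : Node → Label → Node → GOp
  | del : Node → Label → Node → GOp

abbrev GAction := GOp × ℕ

/-- A (general) schedule is a finite sequence of query/add/del actions. -/
abbrev Schedule := List GAction

def GOp.toOp? : GOp → Option Op
  | GOp.query _ _ => none
  | GOp.add m l n => some (Op.add m l n)
  | GOp.del m l n => some (Op.del m l n)

/-- The QL schedule of a schedule: remove all query actions. -/
def qlOf (S : Schedule) : QLSchedule :=
  S.filterMap (fun a => (a.1.toOp?).map (fun o => (o, a.2)))

/-- The answer of `query(n,pe)` on a tree `T`. -/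
def queryAnswer (n : Node) (pe : PathExpr) (T : Tree3) : Set Node :=
  {n' | n' ∈ T.N ∧ ∃ lp, SPath (↑T.E) n lp n' ∧ lp ∈ pe.lang}

/-- A schedule is consistent iff its QL schedule is. -/
def ConsistentSched (S : Schedule) : Prop := ConsistentQL (qlOf S)

/-- Run a schedule on a tree: the final tree together with, for each query (in order),
its transaction identifier and its answer; `none` if some update is undefined. -/
noncomputable def runQ : Schedule → Tree3 → Option (Tree3 × List (ℕ × Set Node))
  | [], T => some (T, [])
  | (GOp.query n pe, t) :: rest, T =>
      (runQ rest T).map (fun p => (p.1, (t, queryAnswer n pe T) :: p.2))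
  | (GOp.add m l n, _) :: rest, T =>
      (applyOp (Op.add m l n) T).bind (runQ rest)
  | (GOp.del m l n, _) :: rest, T =>
      (applyOp (Op.del m l n) T).bind (runQ rest)

/-- Two schedules are equivalent: defined on the same non-empty set of document trees,
and on each such tree they produce the same output tree and, per transaction, the same
sequence of query answers. -/
def EquivSched (S₁ S₂ : Schedule) : Prop :=
  (∃ T, IsDT T ∧ (runQ S₁ T).isSome) ∧
  ∀ T, IsDT T →
    ((runQ S₁ T).isSome ↔ (runQ S₂ T).isSome) ∧
    ∀ p₁ p₂, runQ S₁ T = some p₁ → runQ S₂ T = some p₂ →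
      p₁.1 = p₂.1 ∧
      ∀ t : ℕ, (p₁.2.filter (fun x => x.1 == t)).map Prod.snd
             = (p₂.2.filter (fun x => x.1 == t)).map Prod.snd

/-- Two schedules are interleavings of the same set of transactions. -/
def SameTransG (S S' : Schedule) : Prop :=
  ∀ t : ℕ, S.filter (fun a => a.2 == t) = S'.filter (fun a => a.2 == t)

/-- A schedule is serial iff the actions of each transaction occur consecutively. -/
def SerialG (S : Schedule) : Prop :=
  ∀ i j k : ℕ, i ≤ j → j ≤ k →
    ∀ a b c : GAction, S[i]? = some a → S[j]? = some b → S[k]? = some c →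
      a.2 = c.2 → b.2 = a.2

/-- A schedule is serializable iff it is equivalent to a serial schedule over the same
set of transactions. -/
def SerializableSched (S : Schedule) : Prop :=
  ∃ S', SerialG S' ∧ SameTransG S S' ∧ EquivSched S S'

/-- `E^min(S^Q)` where `Q` is the action at position `i` of `S`. -/
def EminSQ (S : Schedule) (i : ℕ) : Set Edge :=
  (EminI (qlOf S) \ DELs (qlOf (S.take i))) ∪ ADDs (qlOf (S.take i))

/-- `E^max(S^Q)` where `Q` is the action at position `i` of `S`. -/
def EmaxSQ (S : Schedule) (i : ℕ) : Set Edge :=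
  (EmaxI (qlOf S) \ DELs (qlOf (S.take i))) ∪ ADDs (qlOf (S.take i))

/-- `x` is a non-building-node of `S`: some `add(m,l,x)` or `del(m,l,x)` occurs in `S`. -/
def NonBuilding (S : Schedule) (x : Node) : Prop :=
  ∃ a ∈ S, ∃ m l, a.1 = GOp.add m l x ∨ a.1 = GOp.del m l x

/-- `x` is a node of the graph (edge set) `G`. -/
def NodeOfGraph (G : Set Edge) (x : Node) : Prop := ∃ e ∈ G, e.1 = x ∨ e.2.2 = x

/-- `x` has a parent in the edge set `G`. -/
def HasParent (G : Set Edge) (x : Node) : Prop := ∃ e ∈ G, e.2.2 = x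

/-- `PQRN(S,Q)` for the query `Q = query(n,pe)` at position `i` of `S`:
the nodes `m` of the graph `E^min(S^Q)` that are non-building-nodes, whose root
ancestor `r` in the forest `E^min(S^Q)` (the node with no parent from which `m` is
reachable, via the label path `ALabel(S^Q,m)`) is a building-node different from `n`,
and such that `L(SOP(pe)_{ALabel(S^Q,m)}) ≠ ∅`. -/
def PQRN (S : Schedule) (i : ℕ) (n : Node) (pe : PathExpr) : Set Node :=
  {m | NodeOfGraph (EminSQ S i) m ∧ NonBuilding S m ∧
       ∃ r lp, SPath (EminSQ S i) r lp m ∧ ¬ HasParent (EminSQ S i) r ∧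
         ¬ NonBuilding S r ∧ r ≠ n ∧ LSOP pe lp ≠ ∅}

/-- The answer of the query at position `i` of `S` when `S` is applied to `T`
(the query is evaluated on the tree obtained by applying the actions before it). -/
noncomputable def answerAt (S : Schedule) (i : ℕ) (T : Tree3) : Option (Set Node) :=
  match S[i]? with
  | some (GOp.query n pe, _) => (applyQL (qlOf (S.take i)) T).map (queryAnswer n pe)
  | _ => none

/-!
The first occurrence of a node or edge in `S₁ ⋯ Sₙ` is its first occurrence in the first `Sᵢ`
mentioning it, so it suffices to describe the four sets of a concatenation `S.B` of two
schedules and iterate. For nodes this is pure bookkeeping: a node occurring in `S` can be in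
`N^max_I(S)` only if it is in `N^min_I(S)`. For edges consistency enters: if `e` does not occur
in `S` and its first occurrence in `B` is a deletion, then on a tree where `S.B` is defined `e`
is present after `S`, hence throughout `S`; since an added node is new and a deleted node is
gone afterwards, `S` touches no endpoint of `e`, i.e. `e ∈ E^max_I(S)`.
-/

section Trees

variable {T T' : Tree3}

theorem IsDT.exists_parent (hT : IsDT T) {n : Node} (hn : n ∈ T.N) (hroot : n ≠ T.root) :
    ∃ m l, (m, l, n) ∈ T.E := by
  rcases (hT.2.2.2.2 n hn).cases_tail with h | ⟨m, -, l, hl⟩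
  · exact absurd h hroot
  · exact ⟨m, l, hl⟩

theorem applyOp_add_eq_some {m l n : Node} (h : applyOp (Op.add m l n) T = some T') :
    (m, l, n) ∉ T.E ∧ IsDT T' ∧ T' = ⟨insert n T.N, insert (m, l, n) T.E, T.root⟩ := by
  simp only [applyOp] at h
  split_ifs at h with hc
  cases h
  obtain ⟨hmem, hdt⟩ := not_or.mp hc
  exact ⟨hmem, not_not.mp hdt, rfl⟩

theorem applyOp_del_eq_some {m l n : Node} (h : applyOp (Op.del m l n) T = some T') :
    (m, l, n) ∈ T.E ∧ IsDT T' ∧ T' = ⟨T.N.erase n, T.E.erase (m, l, n), T.root⟩ := by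
  simp only [applyOp] at h
  split_ifs at h with hc
  cases h
  obtain ⟨hmem, hdt⟩ := not_or.mp hc
  exact ⟨not_not.mp hmem, not_not.mp hdt, rfl⟩

theorem IsDT.of_applyOp {o : Op} (h : applyOp o T = some T') : IsDT T' := by
  cases o with
  | add m l n => exact (applyOp_add_eq_some h).2.1
  | del m l n => exact (applyOp_del_eq_some h).2.1

theorem mem_of_applyOp {o : Op} {e : Edge} (h : applyOp o T = some T') (hne : o.edge ≠ e)
    (he : e ∈ T'.E) : e ∈ T.E := by
  cases o with
  | add m l n =>
    obtain ⟨-, -, rfl⟩ := applyOp_add_eq_some h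
    exact (Finset.mem_insert.mp he).resolve_left (Ne.symm hne)
  | del m l n =>
    obtain ⟨-, -, rfl⟩ := applyOp_del_eq_some h
    exact Finset.mem_of_mem_erase he

theorem tgt_not_mem_of_applyOp (hT : IsDT T) {o : Op} (h : applyOp o T = some T') :
    o.tgt ∉ T.N ∨ o.tgt ∉ T'.N := by
  cases o with
  | add m l n =>
    obtain ⟨hnew, hT', rfl⟩ := applyOp_add_eq_some h
    left
    intro hn
    have hroot : n ≠ T.root := hT'.2.2.2.1 _ (Finset.mem_insert_self _ _)
    obtain ⟨m', l', hpar⟩ := hT.exists_parent hn hroot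
    have := hT'.2.2.1 _ (Finset.mem_insert_self _ _) _ (Finset.mem_insert_of_mem hpar) rfl
    exact hnew (this ▸ hpar)
  | del m l n =>
    obtain ⟨-, -, rfl⟩ := applyOp_del_eq_some h
    exact Or.inr (Finset.notMem_erase n T.N)

theorem tgt_ne_of_applyOp (hT : IsDT T) {o : Op} (h : applyOp o T = some T') {e : Edge}
    (he : e ∈ T.E) (he' : e ∈ T'.E) : o.tgt ≠ e.1 ∧ o.tgt ≠ e.2.2 := by
  have hends := hT.2.1 e he
  have hends' := (IsDT.of_applyOp h).2.1 e he'
  rcases tgt_not_mem_of_applyOp hT h with hn | hn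
  · exact ⟨fun h => hn (h ▸ hends.1), fun h => hn (h ▸ hends.2)⟩
  · exact ⟨fun h => hn (h ▸ hends'.1), fun h => hn (h ▸ hends'.2)⟩

end Trees

section Schedules

variable {S B : QLSchedule} {T T' : Tree3}

theorem applyQL_append (S B : QLSchedule) (T : Tree3) :
    applyQL (S ++ B) T = (applyQL S T).bind (applyQL B) := by
  induction S generalizing T with
  | nil => rfl
  | cons a S ih => simp only [List.cons_append, applyQL, Option.bind_assoc, ih]

theorem IsDT.of_applyQL (hT : IsDT T) (h : applyQL S T = some T') : IsDT T' := by
  induction S generalizing T with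
  | nil => exact Option.some.inj h ▸ hT
  | cons a S ih =>
    obtain ⟨T₁, h₁, h₂⟩ := Option.bind_eq_some_iff.mp h
    exact ih (IsDT.of_applyOp h₁) h₂

theorem DefinedOn.of_append (h : DefinedOn (S ++ B) T) :
    ∃ T₁, applyQL S T = some T₁ ∧ DefinedOn B T₁ := by
  obtain ⟨hT, hdef⟩ := h
  rw [applyQL_append] at hdef
  cases h₁ : applyQL S T with
  | none => simp [h₁] at hdef
  | some T₁ => exact ⟨T₁, rfl, hT.of_applyQL h₁, by simpa [h₁] using hdef⟩

theorem ConsistentQL.of_append_right (h : ConsistentQL (S ++ B)) : ConsistentQL B := by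
  obtain ⟨T, hT⟩ := h
  obtain ⟨T₁, -, hB⟩ := hT.of_append
  exact ⟨T₁, hB⟩

theorem ops_append (S B : QLSchedule) : ops (S ++ B) = ops S ++ ops B := List.map_append

theorem firstNodeOp_append (S B : QLSchedule) (x : Node) :
    firstNodeOp (S ++ B) x = (firstNodeOp S x).or (firstNodeOp B x) := by
  rw [firstNodeOp, ops_append, List.find?_append]; rfl

theorem firstEdgeOp_append (S B : QLSchedule) (e : Edge) :
    firstEdgeOp (S ++ B) e = (firstEdgeOp S e).or (firstEdgeOp B e) := by
  rw [firstEdgeOp, ops_append, List.find?_append]; rfl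

theorem firstEdgeOp_cons (a : QLAction) (S : QLSchedule) (e : Edge) :
    firstEdgeOp (a :: S) e = if a.1.edge = e then some a.1 else firstEdgeOp S e := by
  by_cases h : a.1.edge = e <;> simp [firstEdgeOp, ops, h]

theorem occursTgt_append {x : Node} : occursTgt (S ++ B) x ↔ occursTgt S x ∨ occursTgt B x := by
  simp [occursTgt, ops_append, or_and_right, exists_or]

end Schedules

section FirstOccurrence

variable {S B : QLSchedule} {T T' : Tree3}

theorem mem_NminI_of_mem_NmaxI {x : Node} {o : Op} (h : firstNodeOp S x = some o)
    (hx : x ∈ NmaxI S) : x ∈ NminI S := by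
  have hocc := List.find?_some h
  cases o with
  | add m l n =>
    obtain rfl | rfl : m = x ∨ n = x := by simpa [Op.src, Op.tgt] using hocc
    · exact Or.inl (Or.inl ⟨l, n, h⟩)
    · exact absurd ⟨m, l, h⟩ hx
  | del m l n =>
    obtain rfl | rfl : m = x ∨ n = x := by simpa [Op.src, Op.tgt] using hocc
    · exact Or.inl (Or.inr ⟨l, n, h⟩)
    · exact Or.inr ⟨m, l, h⟩

theorem mem_NminI_congr {S' : QLSchedule} {x : Node}
    (h : firstNodeOp S x = firstNodeOp S' x) : x ∈ NminI S ↔ x ∈ NminI S' := by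
  simp only [NminI, Set.mem_union, Set.mem_ofPred_eq, h]

theorem mem_NmaxI_congr {S' : QLSchedule} {x : Node}
    (h : firstNodeOp S x = firstNodeOp S' x) : x ∈ NmaxI S ↔ x ∈ NmaxI S' := by
  simp only [NmaxI, Set.mem_ofPred_eq, h]

theorem NminI_nil : NminI [] = ∅ := by
  simp [NminI, firstNodeOp, ops]

theorem NmaxI_nil : NmaxI [] = Set.univ := by
  simp [NmaxI, firstNodeOp, ops]

theorem NminI_append_NmaxI_append (S B : QLSchedule) :
    NminI (S ++ B) = NminI S ∪ (NmaxI S ∩ NminI B) ∧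
    NmaxI (S ++ B) = NmaxI S ∩ (NminI S ∪ NmaxI B) := by
  simp only [Set.ext_iff, ← forall_and]
  intro x
  cases hS : firstNodeOp S x with
  | none =>
    have hSB : firstNodeOp (S ++ B) x = firstNodeOp B x := by
      rw [firstNodeOp_append, hS, Option.none_or]
    have hnil : firstNodeOp S x = firstNodeOp [] x := hS
    simp [mem_NminI_congr hSB, mem_NmaxI_congr hSB, mem_NminI_congr hnil,
      mem_NmaxI_congr hnil, NminI_nil, NmaxI_nil]
  | some o =>
    have hSB : firstNodeOp (S ++ B) x = firstNodeOp S x := by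
      rw [firstNodeOp_append, hS, Option.some_or]
    have := mem_NminI_of_mem_NmaxI hS
    simp only [mem_NminI_congr hSB, mem_NmaxI_congr hSB, Set.mem_union, Set.mem_inter_iff]
    exact ⟨(or_iff_left_of_imp fun h => this h.1).symm,
      (and_iff_left_of_imp fun h => Or.inl (this h)).symm⟩

theorem mem_EminI_congr {S' : QLSchedule} {e : Edge}
    (h : firstEdgeOp S e = firstEdgeOp S' e) : e ∈ EminI S ↔ e ∈ EminI S' := by
  simp only [EminI, Set.mem_ofPred_eq, h]

theorem EminI_nil : EminI [] = ∅ := by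
  simp [EminI, firstEdgeOp, ops]

theorem EmaxI_nil : EmaxI [] = Set.univ := by
  simp [EmaxI, EminI, firstEdgeOp, occursTgt, ops]

theorem occursTgt_of_firstEdgeOp_eq_some {e : Edge} {o : Op} (h : firstEdgeOp S e = some o) :
    occursTgt S e.2.2 := by
  refine ⟨o, List.mem_of_find?_eq_some h, ?_⟩
  obtain rfl : o.edge = e := by simpa using List.find?_some h
  cases o <;> rfl

theorem mem_EmaxI_iff_of_occursTgt {e : Edge} (h : occursTgt S e.2.2) :
    e ∈ EmaxI S ↔ e ∈ EminI S :=
  or_iff_left fun he => he.2 h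

theorem mem_edges_of_mem_EminI {e : Edge} (h : applyQL B T = some T')
    (hB : e ∈ EminI B) : e ∈ T.E := by
  induction B generalizing T with
  | nil => simp [EminI, firstEdgeOp, ops] at hB
  | cons b B ih =>
    obtain ⟨T₁, h₁, h₂⟩ := Option.bind_eq_some_iff.mp h
    have hB' : firstEdgeOp (b :: B) e = _ := hB
    rw [firstEdgeOp_cons] at hB'
    split_ifs at hB' with hb
    · rw [Option.some.inj hB'] at h₁
      exact (applyOp_del_eq_some h₁).1
    · exact mem_of_applyOp h₁ hb (ih h₂ hB')

theorem mem_edges_of_firstEdgeOp_eq_none (hT : IsDT T) (h : applyQL S T = some T') {e : Edge}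
    (hS : firstEdgeOp S e = none) (he : e ∈ T'.E) :
    e ∈ T.E ∧ ∀ o ∈ ops S, o.tgt ≠ e.1 ∧ o.tgt ≠ e.2.2 := by
  induction S generalizing T with
  | nil => exact ⟨Option.some.inj h ▸ he, by simp [ops]⟩
  | cons a S ih =>
    obtain ⟨T₁, h₁, h₂⟩ := Option.bind_eq_some_iff.mp h
    rw [firstEdgeOp_cons] at hS
    split_ifs at hS with ha
    obtain ⟨he₁, hops⟩ := ih (IsDT.of_applyOp h₁) h₂ hS
    have heT := mem_of_applyOp h₁ ha he₁
    refine ⟨heT, ?_⟩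
    simp only [ops, List.map_cons, List.mem_cons, forall_eq_or_imp]
    exact ⟨tgt_ne_of_applyOp hT h₁ heT he₁, hops⟩

theorem mem_EmaxI_of_mem_EminI_append (h : ConsistentQL (S ++ B)) {e : Edge}
    (hS : firstEdgeOp S e = none) (hB : e ∈ EminI B) : e ∈ EmaxI S := by
  obtain ⟨T, hT⟩ := h
  obtain ⟨T₁, h₁, -, hB₁⟩ := hT.of_append
  obtain ⟨T₂, h₂⟩ := Option.isSome_iff_exists.mp hB₁
  have he := mem_edges_of_mem_EminI h₂ hB
  have hops := (mem_edges_of_firstEdgeOp_eq_none hT.1 h₁ hS he).2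
  exact Or.inr ⟨fun ⟨o, ho, hx⟩ => (hops o ho).1 hx, fun ⟨o, ho, hx⟩ => (hops o ho).2 hx⟩

theorem EminI_append_EmaxI_append (h : ConsistentQL (S ++ B)) :
    EminI (S ++ B) = EminI S ∪ (EmaxI S ∩ EminI B) ∧
    EmaxI (S ++ B) = EmaxI S ∩ (EminI S ∪ EmaxI B) := by
  simp only [Set.ext_iff, ← forall_and]
  intro e
  cases hS : firstEdgeOp S e with
  | none =>
    have hSB : firstEdgeOp (S ++ B) e = firstEdgeOp B e := by
      rw [firstEdgeOp_append, hS, Option.none_or]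
    have hnil : firstEdgeOp S e = firstEdgeOp [] e := hS
    have key := mem_EmaxI_of_mem_EminI_append h hS
    have hmin : e ∉ EminI S := by simp [mem_EminI_congr hnil, EminI_nil]
    simp only [EmaxI, Set.mem_union, Set.mem_inter_iff, Set.mem_ofPred_eq,
      mem_EminI_congr hSB, occursTgt_append] at key hmin ⊢
    tauto
  | some o =>
    have hSB : firstEdgeOp (S ++ B) e = firstEdgeOp S e := by
      rw [firstEdgeOp_append, hS, Option.some_or]
    have hocc := occursTgt_of_firstEdgeOp_eq_some hS
    have hoccSB : occursTgt (S ++ B) e.2.2 := occursTgt_append.mpr (Or.inl hocc)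
    simp only [mem_EmaxI_iff_of_occursTgt hocc, mem_EmaxI_iff_of_occursTgt hoccSB,
      mem_EminI_congr hSB, Set.mem_union, Set.mem_inter_iff]
    exact ⟨(or_iff_left_of_imp And.left).symm, (and_iff_left_of_imp Or.inl).symm⟩

end FirstOccurrence

section PrefixFormula

variable {γ α : Type*}

theorem flatten_eq_iUnion_iInter_of_append {P : List γ → Prop}
    (hP : ∀ S B, P (S ++ B) → P B) {f g : List γ → Set α}
    (hf : f [] = ∅) (hg : g [] = Set.univ)
    (happend : ∀ S B, P (S ++ B) → f (S ++ B) = f S ∪ (g S ∩ f B) ∧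
      g (S ++ B) = g S ∩ (f S ∪ g B))
    (SS : List (List γ)) (hSS : P SS.flatten) :
    f SS.flatten = (⋃ i : Fin SS.length, (f (SS.get i) ∩
        ⋂ (k : Fin SS.length) (_ : (k : ℕ) < (i : ℕ)), g (SS.get k))) ∧
    g SS.flatten = (⋂ i : Fin SS.length, (g (SS.get i) ∪
        ⋃ (k : Fin SS.length) (_ : (k : ℕ) < (i : ℕ)), f (SS.get k))) := by
  induction SS with
  | nil => simp [hf, hg]
  | cons S SS ih =>
    obtain ⟨ihf, ihg⟩ := ih (hP _ _ hSS)
    obtain ⟨hfS, hgS⟩ := happend S SS.flatten hSS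
    rw [List.flatten_cons, hfS, hgS, ihf, ihg]
    constructor <;> ext x <;> by_cases x ∈ f S <;> by_cases x ∈ g S <;>
      simp_all [Fin.exists_fin_succ, Fin.forall_fin_succ]

end PrefixFormula

theorem concat_basic_input_sets_general (SS : List QLSchedule)
    (hconcat : ConsistentQL SS.flatten) :
    NminI SS.flatten =
      (⋃ i : Fin SS.length, (NminI (SS.get i) ∩
        ⋂ (k : Fin SS.length) (_ : (k : ℕ) < (i : ℕ)), NmaxI (SS.get k))) ∧
    NmaxI SS.flatten =
      (⋂ i : Fin SS.length, (NmaxI (SS.get i) ∪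
        ⋃ (k : Fin SS.length) (_ : (k : ℕ) < (i : ℕ)), NminI (SS.get k))) ∧
    EminI SS.flatten =
      (⋃ i : Fin SS.length, (EminI (SS.get i) ∩
        ⋂ (k : Fin SS.length) (_ : (k : ℕ) < (i : ℕ)), EmaxI (SS.get k))) ∧
    EmaxI SS.flatten =
      (⋂ i : Fin SS.length, (EmaxI (SS.get i) ∪
        ⋃ (k : Fin SS.length) (_ : (k : ℕ) < (i : ℕ)), EminI (SS.get k))) := by
  obtain ⟨hNmin, hNmax⟩ := flatten_eq_iUnion_iInter_of_append (P := fun _ => True)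
    (fun _ _ _ => trivial) NminI_nil NmaxI_nil
    (fun S B _ => NminI_append_NmaxI_append S B) SS trivial
  obtain ⟨hEmin, hEmax⟩ := flatten_eq_iUnion_iInter_of_append
    (fun _ _ => ConsistentQL.of_append_right) EminI_nil EmaxI_nil
    (fun _ _ => EminI_append_EmaxI_append) SS hconcat
  exact ⟨hNmin, hNmax, hEmin, hEmax⟩

/-- The basic input sets of a consistent concatenation of consistent QL
schedules, computed from the basic input sets of the components. -/
theorem concat_basic_input_sets (SS : List QLSchedule)
    (h : ∀ S ∈ SS, ConsistentQL S) (hconcat : ConsistentQL SS.flatten) :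
    NminI SS.flatten =
      (⋃ i : Fin SS.length, (NminI (SS.get i) ∩
        ⋂ (k : Fin SS.length) (_ : (k : ℕ) < (i : ℕ)), NmaxI (SS.get k))) ∧
    NmaxI SS.flatten =
      (⋂ i : Fin SS.length, (NmaxI (SS.get i) ∪
        ⋃ (k : Fin SS.length) (_ : (k : ℕ) < (i : ℕ)), NminI (SS.get k))) ∧
    EminI SS.flatten =
      (⋃ i : Fin SS.length, (EminI (SS.get i) ∩
        ⋂ (k : Fin SS.length) (_ : (k : ℕ) < (i : ℕ)), EmaxI (SS.get k))) ∧
    EmaxI SS.flatten =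
      (⋂ i : Fin SS.length, (EmaxI (SS.get i) ∪
        ⋃ (k : Fin SS.length) (_ : (k : ℕ) < (i : ℕ)), EminI (SS.get k))) :=
  concat_basic_input_sets_general SS hconcat
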